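/- arXiv:math/0511621 — 2 statements merged into one kernel-verified Lean document; each statement's English description precedes it below -/
import Mathlib

section
/- Assume x² = κ + 2 and x ≠ ±2. Then there exists λ ∈ ℂ with λ + λ⁻¹ = x such that y(n) = λⁿ·y(0) for all n ∈ ℤ. In particular, if in addition x is not a real number in [−2,2] and y(0) ≠ 0, then (choosing λ with |λ| > 1, possibly after replacing λ by λ⁻¹ and n by −n) |y(n)| → ∞ as n → +∞ and |y(n)| → 0 as n → −∞, or vice versa. -/
/-!
The recurrence and the trace relation force `y 0 ^ 2 + y 1 ^ 2 - x * y 0 * y 1 = 0` once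
`x ^ 2 = κ + 2`. Factoring this binary form over `ℂ` as `(y 1 - λ y 0)(y 1 - λ⁻¹ y 0)` with
`λ + λ⁻¹ = x` gives `y 1 = λ y 0` for one of the two roots, and a solution of the two-sided
recurrence is determined by its values at `0` and `1`, so `y n = λ ^ n * y 0`. If `x ∉ [-2, 2]`
then `|λ| ≠ 1`, because `λ + λ⁻¹ = 2 Re λ` on the unit circle, and the geometric growth of `|λ| ^ n`
in one direction and decay in the other gives the dichotomy.
-/

open Filter Topology

noncomputable section

namespace TWZ

/-- `ℚ̂ = ℚ ∪ {∞}`, modeling essential simple closed curves on the one-holed torus. -/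
abbrev QHat := OnePoint ℚ

/-- `ℝ̂ = ℝ ∪ {∞}`, the circle (one-point compactification of `ℝ`),
modeling the projective lamination space. -/
abbrev RHat := OnePoint ℝ

/-- Numerator of an extended rational, with `∞ = 1/0`. -/
def qnum (x : QHat) : ℤ := @Option.elim ℚ ℤ x 1 Rat.num

/-- Denominator of an extended rational, with `∞ = 1/0`. -/
def qden (x : QHat) : ℤ := @Option.elim ℚ ℤ x 0 (fun q => (q.den : ℤ))

/-- The natural inclusion `ℚ̂ → ℝ̂`. -/
def toRHat (x : QHat) : RHat := @Option.map ℚ ℝ (fun q => (q : ℝ)) x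

/-- Farey neighbors: `p/q` and `r/s` (in lowest terms) with `|ps - qr| = 1`. -/
def FareyNbr (a b : QHat) : Prop := |qnum a * qden b - qnum b * qden a| = 1

/-- A Farey triangle: three pairwise Farey neighbors. -/
def FareyTriangle (x y z : QHat) : Prop := FareyNbr x y ∧ FareyNbr y z ∧ FareyNbr x z

/-- A Fricke trace map of level `κ`: the vertex relation on Farey triangles and
the edge relation on Farey edges with their two opposite vertices. -/
def IsFricke (κ : ℂ) (φ : QHat → ℂ) : Prop :=
  (∀ x y z : QHat, FareyTriangle x y z →
    φ x ^ 2 + φ y ^ 2 + φ z ^ 2 - φ x * φ y * φ z - 2 = κ) ∧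
  (∀ x y z z' : QHat, FareyTriangle x y z → FareyTriangle x y z' → z ≠ z' →
    φ z + φ z' = φ x * φ y)

/-- `lam ∈ ℝ̂` is an end invariant of `φ` : there are `K > 0` and pairwise distinct
`X_n ∈ ℚ̂` with `X_n → lam` and `|φ (X_n)| ≤ K` for all `n`. -/
def IsEndInv (φ : QHat → ℂ) (lam : RHat) : Prop :=
  ∃ K : ℝ, 0 < K ∧ ∃ s : ℕ → QHat, Function.Injective s ∧
    Tendsto (fun n => toRHat (s n)) atTop (nhds lam) ∧
    ∀ n, ‖φ (s n)‖ ≤ K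

/-- The set `ℰ(φ) ⊆ ℝ̂` of end invariants of `φ`. -/
def endInvs (φ : QHat → ℂ) : Set RHat := {lam | IsEndInv φ lam}

/-- `φ` is dihedral: it vanishes on two of the three vertices of some Farey triangle. -/
def IsDihedral (φ : QHat → ℂ) : Prop :=
  ∃ x y z : QHat, FareyTriangle x y z ∧ φ x = 0 ∧ φ y = 0

/-- `φ` is of SU(2) type: all values are real and lie in `[-2, 2]`. -/
def IsSU2Type (φ : QHat → ℂ) : Prop :=
  ∀ x : QHat, ∃ r : ℝ, -2 ≤ r ∧ r ≤ 2 ∧ φ x = r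

/-- `φ` is real: all its values are real. -/
def IsRealMap (φ : QHat → ℂ) : Prop := ∀ x : QHat, ∃ r : ℝ, φ x = r

/-- The extended BQ-conditions on a subset `S ⊆ ℚ̂`: no value on `S` lies in the real
open interval `(-2,2)`, and only finitely many values on `S` have absolute value `≤ 2`. -/
def ExtendedBQ (φ : QHat → ℂ) (S : Set QHat) : Prop :=
  (∀ x ∈ S, ¬ ∃ r : ℝ, -2 < r ∧ r < 2 ∧ φ x = r) ∧
  {x ∈ S | ‖φ x‖ ≤ 2}.Finite

/-- A Cantor subset of `ℝ̂`: nonempty, compact, perfect and totally disconnected. -/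
def IsCantorSet (C : Set RHat) : Prop :=
  C.Nonempty ∧ IsCompact C ∧ Perfect C ∧ IsTotallyDisconnected C

/-- Parity class odd/odd. -/
def classOO : Set QHat := {x | Odd (qnum x) ∧ Odd (qden x)}

/-- Parity class even/odd. -/
def classEO : Set QHat := {x | Even (qnum x) ∧ Odd (qden x)}

/-- Parity class odd/even. -/
def classOE : Set QHat := {x | Odd (qnum x) ∧ Even (qden x)}

/-- `φ` is imaginary: not dihedral, real on one of the three parity classes and
purely imaginary on the other two. -/
def IsImaginary (φ : QHat → ℂ) : Prop :=
  ¬ IsDihedral φ ∧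
  ∃ S ∈ ({classOO, classEO, classOE} : Set (Set QHat)),
    (∀ x ∈ S, (φ x).im = 0) ∧ (∀ x ∉ S, (φ x).re = 0)

section Algebra

theorem eq_of_recurrence {R : Type*} [CommRing R] {x : R} {u v : ℤ → R}
    (hu : ∀ n : ℤ, u (n + 1) + u (n - 1) = x * u n)
    (hv : ∀ n : ℤ, v (n + 1) + v (n - 1) = x * v n)
    (h0 : u 0 = v 0) (h1 : u 1 = v 1) : u = v := by
  suffices h : ∀ n : ℤ, u n = v n ∧ u (n + 1) = v (n + 1) from funext fun n => (h n).1
  intro n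
  induction n using Int.induction_on with
  | zero => exact ⟨h0, by simpa using h1⟩
  | succ k ih =>
    have hu' := hu (k + 1)
    have hv' := hv (k + 1)
    simp only [add_sub_cancel_right] at hu' hv'
    exact ⟨ih.2, by linear_combination hu' - hv' + x * ih.2 - ih.1⟩
  | pred k ih =>
    have hu' := hu (-k)
    have hv' := hv (-k)
    rw [sub_add_cancel]
    exact ⟨by linear_combination hu' - hv' + x * ih.1 - ih.2, ih.1⟩

variable {K : Type*} [Field K]

theorem zpow_mul_recurrence {l : K} (hl : l ≠ 0) (c : K) (n : ℤ) :
    l ^ (n + 1) * c + l ^ (n - 1) * c = (l + l⁻¹) * (l ^ n * c) := by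
  rw [zpow_add_one₀ hl, zpow_sub_one₀ hl]
  ring

theorem exists_add_inv_eq [IsAlgClosed K] (x : K) : ∃ l : K, l ≠ 0 ∧ l + l⁻¹ = x := by
  open Polynomial in
  obtain ⟨l, hl⟩ := IsAlgClosed.exists_root (C 1 * X ^ 2 + C (-x) * X + C 1)
    (by rw [degree_quadratic one_ne_zero]; decide)
  have hl : l ^ 2 - x * l + 1 = 0 := by
    simp only [IsRoot, eval_add, eval_mul, eval_C, eval_pow, eval_X] at hl
    linear_combination hl
  have hl0 : l ≠ 0 := by rintro rfl; simp at hl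
  refine ⟨l, hl0, ?_⟩
  field_simp
  linear_combination hl

theorem exists_add_inv_eq_and_eq_mul_of_sq_add_sq_sub_mul [IsAlgClosed K] {x a b : K}
    (h : a ^ 2 + b ^ 2 - x * a * b = 0) : ∃ l : K, l ≠ 0 ∧ l + l⁻¹ = x ∧ b = l * a := by
  obtain ⟨l, hl0, hlx⟩ := exists_add_inv_eq x
  have hfactor : (b - l * a) * (b - l⁻¹ * a) = 0 := by
    rw [← h, ← hlx]
    field_simp
    ring
  rcases mul_eq_zero.mp hfactor with hb | hb
  · exact ⟨l, hl0, hlx, sub_eq_zero.mp hb⟩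
  · exact ⟨l⁻¹, inv_ne_zero hl0, by rw [inv_inv, add_comm, hlx], sub_eq_zero.mp hb⟩

end Algebra

theorem exists_real_add_inv_of_norm_eq_one {l : ℂ} (h : ‖l‖ = 1) :
    ∃ r : ℝ, -2 ≤ r ∧ r ≤ 2 ∧ l + l⁻¹ = r := by
  have hre := abs_le.mp (h ▸ Complex.abs_re_le_norm l)
  exact ⟨2 * l.re, by linarith [hre.1], by linarith [hre.2],
    by rw [Complex.inv_eq_conj h, Complex.add_conj]⟩

section Asymptotics

variable {𝕜 : Type*} [NormedField 𝕜] {l c : 𝕜}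

theorem tendsto_norm_zpow_mul_of_norm_lt_one (hl0 : l ≠ 0) (hl : ‖l‖ < 1) (hc : c ≠ 0) :
    Tendsto (fun n : ℕ => ‖l ^ (n : ℤ) * c‖) atTop (𝓝 0) ∧
      Tendsto (fun n : ℕ => ‖l ^ (-(n : ℤ)) * c‖) atTop atTop := by
  simp only [zpow_neg, zpow_natCast, norm_mul, norm_inv, norm_pow, ← inv_pow]
  refine ⟨?_, ?_⟩
  · simpa using (tendsto_pow_atTop_nhds_zero_of_lt_one (norm_nonneg l) hl).mul_const ‖c‖
  · exact (tendsto_pow_atTop_atTop_of_one_lt ((one_lt_inv₀ (norm_pos_iff.mpr hl0)).mpr hl)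
      ).atTop_mul_const (norm_pos_iff.mpr hc)

theorem tendsto_norm_zpow_mul_dichotomy (hl0 : l ≠ 0) (hl : ‖l‖ ≠ 1) (hc : c ≠ 0) :
    (Tendsto (fun n : ℕ => ‖l ^ (n : ℤ) * c‖) atTop atTop ∧
        Tendsto (fun n : ℕ => ‖l ^ (-(n : ℤ)) * c‖) atTop (𝓝 0)) ∨
      (Tendsto (fun n : ℕ => ‖l ^ (n : ℤ) * c‖) atTop (𝓝 0) ∧
        Tendsto (fun n : ℕ => ‖l ^ (-(n : ℤ)) * c‖) atTop atTop) := by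
  rcases hl.lt_or_gt with hlt | hgt
  · exact Or.inr (tendsto_norm_zpow_mul_of_norm_lt_one hl0 hlt hc)
  · have h := tendsto_norm_zpow_mul_of_norm_lt_one (inv_ne_zero hl0)
      (by rwa [norm_inv, inv_lt_one₀ (norm_pos_iff.mpr hl0)]) hc
    simp only [inv_zpow', neg_neg] at h
    exact Or.inl h.symm

end Asymptotics

theorem neighbors_special_general (κ x : ℂ) (y : ℤ → ℂ)
    (hrec : ∀ n : ℤ, y (n + 1) + y (n - 1) = x * y n)
    (hrel : x ^ 2 + y 0 ^ 2 + y 1 ^ 2 - x * y 0 * y 1 - 2 = κ)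
    (hx : x ^ 2 = κ + 2) :
    (∃ lam : ℂ, lam + lam⁻¹ = x ∧ ∀ n : ℤ, y n = lam ^ n * y 0) ∧
    ((¬ ∃ r : ℝ, -2 ≤ r ∧ r ≤ 2 ∧ x = (r : ℂ)) → y 0 ≠ 0 →
      ((Tendsto (fun n : ℕ => ‖y (n : ℤ)‖) atTop atTop ∧
        Tendsto (fun n : ℕ => ‖y (-(n : ℤ))‖) atTop (nhds 0)) ∨
       (Tendsto (fun n : ℕ => ‖y (n : ℤ)‖) atTop (nhds 0) ∧
        Tendsto (fun n : ℕ => ‖y (-(n : ℤ))‖) atTop atTop))) := by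
  obtain ⟨lam, hlam0, hlam, hy1⟩ := exists_add_inv_eq_and_eq_mul_of_sq_add_sq_sub_mul
    (show y 0 ^ 2 + y 1 ^ 2 - x * y 0 * y 1 = 0 by linear_combination hrel - hx)
  have hy : ∀ n : ℤ, y n = lam ^ n * y 0 := fun n =>
    congrFun (eq_of_recurrence (v := fun n => lam ^ n * y 0) hrec
      (hlam ▸ zpow_mul_recurrence hlam0 (y 0)) (by simp) (by simpa using hy1)) n
  refine ⟨⟨lam, hlam, hy⟩, fun hx_real hy0 => ?_⟩
  have hnorm : ‖lam‖ ≠ 1 := fun h => hx_real (hlam ▸ exists_real_add_inv_of_norm_eq_one h)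
  simpa only [← hy] using tendsto_norm_zpow_mul_dichotomy hlam0 hnorm hy0

/-- Neighbors of `X` when `x² = κ + 2`, `x ≠ ±2`: the values are
`y(n) = λⁿ·y(0)` with `λ + λ⁻¹ = x`; if moreover `x ∉ [-2,2]` and `y(0) ≠ 0` then
`|y(n)| → ∞` as `n → +∞` and `|y(n)| → 0` as `n → −∞`, or vice versa. -/
theorem neighbors_special (κ x : ℂ) (y : ℤ → ℂ)
    (hrec : ∀ n : ℤ, y (n + 1) + y (n - 1) = x * y n)
    (hrel : x ^ 2 + y 0 ^ 2 + y 1 ^ 2 - x * y 0 * y 1 - 2 = κ)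
    (hx : x ^ 2 = κ + 2) (hx2 : x ≠ 2) (hx2' : x ≠ -2) :
    (∃ lam : ℂ, lam + lam⁻¹ = x ∧ ∀ n : ℤ, y n = lam ^ n * y 0) ∧
    ((¬ ∃ r : ℝ, -2 ≤ r ∧ r ≤ 2 ∧ x = (r : ℂ)) → y 0 ≠ 0 →
      ((Tendsto (fun n : ℕ => ‖y (n : ℤ)‖) atTop atTop ∧
        Tendsto (fun n : ℕ => ‖y (-(n : ℤ))‖) atTop (nhds 0)) ∨
       (Tendsto (fun n : ℕ => ‖y (n : ℤ)‖) atTop (nhds 0) ∧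
        Tendsto (fun n : ℕ => ‖y (-(n : ℤ))‖) atTop atTop))) :=
  neighbors_special_general κ x y hrec hrel hx

end TWZ
end
end

section
/- For every κ ∈ ℂ and every Fricke trace map φ of level κ, the set of end invariants ℰ(φ) is a closed subset of ℝ̂. -/
open Filter Topology

noncomputable section

namespace TWZ

/-!
Suppose `λ ∉ ℰ(φ)`. Then `|φ| > 3` at all `X ≠ λ` near `λ`, since values bounded by `3`
accumulating at `λ` would make `λ` an end invariant; so it suffices that no finite `μ ≠ λ` near `λ`
is an end invariant. The edge relation `φ(mediant) + φ(z) = φ(x) φ(y)` controls `φ` on the Farey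
tree below an edge `(x, y)` on which `|φ| > 3`: after finitely many splittings every sub-edge is
*expanding* (its endpoint values dominate the value at the opposite vertex), and below an expanding
edge `|φ(q)|` grows at least linearly in the denominator of `q`. Hence only finitely many
`q ∈ (x, y)` have `|φ(q)| ≤ K`, while an end invariant at `μ` puts infinitely many such `q` into
some short Farey interval near `μ`, found by repeated splitting.
-/

open Set

lemma FareyNbr.symm {a b : QHat} (h : FareyNbr a b) : FareyNbr b a := by
  rwa [FareyNbr, abs_sub_comm]

/-- `a < b` are Farey neighbors, listed in increasing order. -/
def IsFareyPair (a b : ℚ) : Prop := b.num * a.den - a.num * b.den = 1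

def mediant (a b : ℚ) : ℚ := ((a.num + b.num : ℤ) : ℚ) / ((a.den + b.den : ℤ) : ℚ)

namespace IsFareyPair

variable {a b q : ℚ}

lemma lt (h : IsFareyPair a b) : a < b := by
  rw [Rat.lt_iff]; unfold IsFareyPair at h; omega

lemma fareyNbr (h : IsFareyPair a b) : FareyNbr a b := by
  change |a.num * (b.den : ℤ) - b.num * a.den| = 1
  rw [show a.num * (b.den : ℤ) - b.num * a.den = -1 by unfold IsFareyPair at h; linarith]
  rfl

lemma isCoprime_mediant (h : IsFareyPair a b) :
    IsCoprime (a.num + b.num) ((a.den : ℤ) + b.den) :=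
  ⟨a.den, -a.num, by unfold IsFareyPair at h; linear_combination h⟩

lemma num_mediant (h : IsFareyPair a b) : (mediant a b).num = a.num + b.num :=
  Rat.num_div_eq_of_coprime (by positivity) (Int.isCoprime_iff_gcd_eq_one.mp h.isCoprime_mediant)

lemma den_mediant (h : IsFareyPair a b) : ((mediant a b).den : ℤ) = a.den + b.den :=
  Rat.den_div_eq_of_coprime (by positivity) (Int.isCoprime_iff_gcd_eq_one.mp h.isCoprime_mediant)

lemma mediant_left (h : IsFareyPair a b) : IsFareyPair a (mediant a b) := by
  unfold IsFareyPair
  rw [h.num_mediant, h.den_mediant]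
  unfold IsFareyPair at h
  linear_combination h

lemma mediant_right (h : IsFareyPair a b) : IsFareyPair (mediant a b) b := by
  unfold IsFareyPair
  rw [h.num_mediant, h.den_mediant]
  unfold IsFareyPair at h
  linear_combination h

lemma fareyTriangle_mediant (h : IsFareyPair a b) : FareyTriangle a b (mediant a b) :=
  ⟨h.fareyNbr, h.mediant_right.fareyNbr.symm, h.mediant_left.fareyNbr⟩

-- `q.den = (q.num a.den - a.num q.den) b.den + (b.num q.den - q.num b.den) a.den`,
-- and both brackets are positive integers.
lemma den_add_den_le (h : IsFareyPair a b) (hq : q ∈ Ioo a b) : (a.den : ℤ) + b.den ≤ q.den := by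
  have ha : 1 ≤ q.num * a.den - a.num * q.den := by have := (Rat.lt_iff a q).mp hq.1; omega
  have hb : 1 ≤ b.num * q.den - q.num * b.den := by have := (Rat.lt_iff q b).mp hq.2; omega
  unfold IsFareyPair at h
  nlinarith [a.pos, b.pos]

lemma sub_mul_den_mul_den (h : IsFareyPair a b) : (b - a) * (a.den * b.den) = 1 := by
  unfold IsFareyPair at h
  have hq : ((b.num * a.den - a.num * b.den : ℤ) : ℚ) = 1 := by exact_mod_cast h
  push_cast at hq
  linear_combination a.den * b.mul_den_eq_num - b.den * a.mul_den_eq_num + hq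

end IsFareyPair

lemma isFareyPair_intCast (n : ℤ) : IsFareyPair n (n + 1 : ℤ) := by
  simp only [IsFareyPair, Rat.num_intCast, Rat.den_intCast]; ring

structure IsFareyCell (x y : ℚ) (z : QHat) : Prop where
  pair : IsFareyPair x y
  triangle : FareyTriangle x y z
  ne_mediant : z ≠ (mediant x y : QHat)

namespace IsFareyCell

variable {x y : ℚ} {z : QHat}

lemma left (h : IsFareyCell x y z) : IsFareyCell x (mediant x y) y where
  pair := h.pair.mediant_left
  triangle := ⟨h.pair.mediant_left.fareyNbr, h.pair.mediant_right.fareyNbr, h.pair.fareyNbr⟩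
  ne_mediant hy := by
    have := congrArg Rat.den (OnePoint.coe_injective hy)
    have := h.pair.mediant_left.den_mediant
    have := h.pair.den_mediant
    have := x.pos
    omega

lemma right (h : IsFareyCell x y z) : IsFareyCell (mediant x y) y x where
  pair := h.pair.mediant_right
  triangle := ⟨h.pair.mediant_right.fareyNbr, h.pair.fareyNbr.symm,
    h.pair.mediant_left.fareyNbr.symm⟩
  ne_mediant hx := by
    have := congrArg Rat.den (OnePoint.coe_injective hx)
    have := h.pair.mediant_right.den_mediant
    have := h.pair.den_mediant
    have := y.pos
    omega

end IsFareyCell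

lemma isFareyCell_intCast (n : ℤ) : IsFareyCell n (n + 1 : ℤ) OnePoint.infty where
  pair := isFareyPair_intCast n
  triangle := ⟨(isFareyPair_intCast n).fareyNbr,
    show |_ * 0 - 1 * (((n + 1 : ℤ) : ℚ).den : ℤ)| = 1 by simp,
    show |_ * 0 - 1 * ((n : ℚ).den : ℤ)| = 1 by simp⟩
  ne_mediant := (OnePoint.coe_ne_infty _).symm

lemma finite_inter_Ioo_of_split {α : Type*} [LinearOrder α] {s : Set α} {x m y : α}
    (hl : (s ∩ Ioo x m).Finite) (hr : (s ∩ Ioo m y).Finite) : (s ∩ Ioo x y).Finite := by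
  refine ((hl.union (finite_singleton m)).union hr).subset ?_
  rintro q ⟨hs, hxq, hqy⟩
  rcases lt_trichotomy q m with h | rfl | h
  · exact .inl (.inl ⟨hs, hxq, h⟩)
  · exact .inl (.inr rfl)
  · exact .inr ⟨hs, h, hqy⟩

lemma infinite_inter_Ioo_or {α : Type*} [LinearOrder α] {s : Set α} {x y : α}
    (h : (s ∩ Ioo x y).Infinite) (m : α) : (s ∩ Ioo x m).Infinite ∨ (s ∩ Ioo m y).Infinite := by
  by_contra! H
  exact h (finite_inter_Ioo_of_split H.1 H.2)

lemma finite_setOf_den_le (a b : ℚ) (N : ℕ) : {q : ℚ | q ∈ Icc a b ∧ q.den ≤ N}.Finite := by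
  refine ((Finset.Icc 1 N).finite_toSet.biUnion fun d _ =>
    (finite_Icc ⌊a * d⌋ ⌈b * d⌉).image fun p : ℤ => (p : ℚ) / d).subset ?_
  rintro q ⟨⟨ha, hb⟩, hN⟩
  simp only [mem_iUnion, mem_image, Finset.coe_Icc, mem_Icc]
  refine ⟨q.den, ⟨q.pos, hN⟩, q.num, ⟨?_, ?_⟩, q.num_div_den⟩
  · exact (Int.floor_mono (by gcongr : a * q.den ≤ q * q.den)).trans_eq
      (by rw [q.mul_den_eq_num, Int.floor_intCast])
  · exact (by rw [q.mul_den_eq_num, Int.ceil_intCast] : q.num = ⌈q * q.den⌉).trans_le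
      (Int.ceil_mono (by gcongr))

section NormedDivisionRing

variable {𝕜 : Type*} [NormedDivisionRing 𝕜] {a b c d : 𝕜}

lemma two_mul_norm_le_of_add_eq_mul (h : c + d = a * b) (ha : 3 ≤ ‖a‖) (hc : ‖c‖ ≤ ‖b‖) :
    2 * ‖b‖ ≤ ‖d‖ := by
  have := norm_sub_norm_le (a * b) c
  rw [norm_mul, ← h, add_sub_cancel_left] at this
  nlinarith [norm_nonneg b]

lemma norm_le_max_or_two_mul_le (h : c + d = a * b) (ha : 3 ≤ ‖a‖) :
    ‖b‖ ≤ max ‖a‖ ‖c‖ ∨ 2 * ‖b‖ ≤ ‖d‖ :=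
  or_iff_not_imp_left.mpr fun hb =>
    two_mul_norm_le_of_add_eq_mul h ha ((le_max_right _ _).trans (not_le.mp hb).le)

end NormedDivisionRing

def EdgeRelation (φ : QHat → ℂ) : Prop :=
  ∀ x y z z' : QHat, FareyTriangle x y z → FareyTriangle x y z' → z ≠ z' →
    φ z + φ z' = φ x * φ y

section FareyTree

variable {φ : QHat → ℂ} {x y : ℚ} {z : QHat}

lemma IsFareyCell.mediant_add (hφ : EdgeRelation φ) (h : IsFareyCell x y z) :
    φ (mediant x y) + φ z = φ x * φ y :=
  hφ _ _ _ _ h.pair.fareyTriangle_mediant h.triangle h.ne_mediant.symm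

def maxNorm (φ : QHat → ℂ) (x y : ℚ) : ℝ := max ‖φ x‖ ‖φ y‖

structure IsExpanding (φ : QHat → ℂ) (x y : ℚ) (z : QHat) : Prop extends IsFareyCell x y z where
  three_le_left : 3 ≤ ‖φ x‖
  three_le_right : 3 ≤ ‖φ y‖
  norm_le : ‖φ z‖ ≤ maxNorm φ x y

namespace IsExpanding

lemma three_le_maxNorm (h : IsExpanding φ x y z) : 3 ≤ maxNorm φ x y :=
  h.three_le_left.trans (le_max_left _ _)

variable (hφ : EdgeRelation φ)
include hφ

lemma two_mul_maxNorm_le (h : IsExpanding φ x y z) : 2 * maxNorm φ x y ≤ ‖φ (mediant x y)‖ := by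
  have hm := h.mediant_add hφ
  rcases le_total ‖φ x‖ ‖φ y‖ with hxy | hxy
  · rw [maxNorm, max_eq_right hxy]
    refine two_mul_norm_le_of_add_eq_mul (c := φ z) (by rw [add_comm, hm]) h.three_le_left ?_
    exact h.norm_le.trans_eq (max_eq_right hxy)
  · rw [maxNorm, max_eq_left hxy]
    refine two_mul_norm_le_of_add_eq_mul (c := φ z) (by rw [add_comm, hm, mul_comm])
      h.three_le_right ?_
    exact h.norm_le.trans_eq (max_eq_left hxy)

lemma left (h : IsExpanding φ x y z) : IsExpanding φ x (mediant x y) y where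
  toIsFareyCell := h.toIsFareyCell.left
  three_le_left := h.three_le_left
  three_le_right := by linarith [h.two_mul_maxNorm_le hφ, h.three_le_maxNorm]
  norm_le := by
    have hy : ‖φ y‖ ≤ maxNorm φ x y := le_max_right _ _
    have hm : ‖φ (mediant x y)‖ ≤ maxNorm φ x (mediant x y) := le_max_right _ _
    linarith [h.two_mul_maxNorm_le hφ, h.three_le_maxNorm]

lemma right (h : IsExpanding φ x y z) : IsExpanding φ (mediant x y) y x where
  toIsFareyCell := h.toIsFareyCell.right
  three_le_left := by linarith [h.two_mul_maxNorm_le hφ, h.three_le_maxNorm]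
  three_le_right := h.three_le_right
  norm_le := by
    have hx : ‖φ x‖ ≤ maxNorm φ x y := le_max_left _ _
    have hm : ‖φ (mediant x y)‖ ≤ maxNorm φ (mediant x y) y := le_max_left _ _
    linarith [h.two_mul_maxNorm_le hφ, h.three_le_maxNorm]

-- `maxNorm` at least doubles from an edge to its sub-edges, while the sum of the endpoint
-- denominators at most doubles.
theorem den_mul_maxNorm_le {x y : ℚ} {z : QHat} (h : IsExpanding φ x y z) {q : ℚ}
    (hq : q ∈ Ioo x y) : (q.den : ℝ) * maxNorm φ x y ≤ (x.den + y.den) * ‖φ q‖ := by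
  have hden : ((mediant x y).den : ℝ) = x.den + y.den := by exact_mod_cast h.pair.den_mediant
  have hm := h.two_mul_maxNorm_le hφ
  have h3 := h.three_le_maxNorm
  have hq0 : (0 : ℝ) ≤ q.den := q.den.cast_nonneg
  have hx0 : (0 : ℝ) ≤ x.den := x.den.cast_nonneg
  have hy0 : (0 : ℝ) ≤ y.den := y.den.cast_nonneg
  rcases lt_trichotomy q (mediant x y) with hlt | rfl | hgt
  · have hq' : q ∈ Ioo x (mediant x y) := ⟨hq.1, hlt⟩
    have ih := (h.left hφ).den_mul_maxNorm_le hq'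
    have hmax : ‖φ (mediant x y)‖ ≤ maxNorm φ x (mediant x y) := le_max_right _ _
    rw [hden] at ih
    nlinarith [norm_nonneg (φ q)]
  · rw [hden]
    nlinarith
  · have hq' : q ∈ Ioo (mediant x y) y := ⟨hgt, hq.2⟩
    have ih := (h.right hφ).den_mul_maxNorm_le hq'
    have hmax : ‖φ (mediant x y)‖ ≤ maxNorm φ (mediant x y) y := le_max_left _ _
    rw [hden] at ih
    nlinarith [norm_nonneg (φ q)]
termination_by q.den - x.den - y.den
decreasing_by
  · have := h.pair.den_mediant
    have := h.pair.mediant_left.den_add_den_le hq'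
    have := x.pos
    omega
  · have := h.pair.den_mediant
    have := h.pair.mediant_right.den_add_den_le hq'
    have := y.pos
    omega

theorem finite_inter_Ioo (h : IsExpanding φ x y z) (K : ℝ) :
    ({q : ℚ | ‖φ q‖ ≤ K} ∩ Ioo x y).Finite := by
  refine (finite_setOf_den_le x y ⌊K * (x.den + y.den) / 3⌋₊).subset ?_
  rintro q ⟨hK : ‖φ q‖ ≤ K, hq⟩
  refine ⟨Ioo_subset_Icc_self hq, Nat.le_floor ?_⟩
  rw [le_div_iff₀ three_pos]
  calc (q.den : ℝ) * 3 ≤ q.den * maxNorm φ x y := by gcongr; exact h.three_le_maxNorm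
    _ ≤ (x.den + y.den) * ‖φ q‖ := h.den_mul_maxNorm_le hφ hq
    _ ≤ K * (x.den + y.den) := by rw [mul_comm]; gcongr

end IsExpanding

namespace IsFareyCell

variable (hφ : EdgeRelation φ)
include hφ

lemma isExpanding_left_or (h : IsFareyCell x y z) (hx : 3 ≤ ‖φ x‖)
    (hm : 3 ≤ ‖φ (mediant x y)‖) : IsExpanding φ x (mediant x y) y ∨ 2 * ‖φ y‖ ≤ ‖φ z‖ :=
  (norm_le_max_or_two_mul_le (h.mediant_add hφ) hx).imp (fun hle => ⟨h.left, hx, hm, hle⟩) id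

lemma isExpanding_right_or (h : IsFareyCell x y z) (hm : 3 ≤ ‖φ (mediant x y)‖)
    (hy : 3 ≤ ‖φ y‖) : IsExpanding φ (mediant x y) y x ∨ 2 * ‖φ x‖ ≤ ‖φ z‖ :=
  (norm_le_max_or_two_mul_le ((h.mediant_add hφ).trans (mul_comm _ _)) hy).imp
    (fun hle => ⟨h.right, hm, hy, hle.trans_eq (max_comm _ _)⟩) id

theorem finite_inter_Ioo (h : IsFareyCell x y z) (h3 : ∀ q ∈ Icc x y, 3 < ‖φ q‖) (K : ℝ) :
    ({q : ℚ | ‖φ q‖ ≤ K} ∩ Ioo x y).Finite := by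
  -- Induction on the size of `‖φ z‖`: each half of a non-expanding cell is expanding or has
  -- at most half the value at its opposite vertex.
  suffices H : ∀ n : ℕ, ∀ x y z, IsFareyCell x y z → (∀ q ∈ Icc x y, 3 < ‖φ q‖) →
      IsExpanding φ x y z ∨ ‖φ z‖ ≤ 3 * 2 ^ n → ({q : ℚ | ‖φ q‖ ≤ K} ∩ Ioo x y).Finite by
    obtain ⟨n, hn⟩ := pow_unbounded_of_one_lt ‖φ z‖ one_lt_two
    exact H n x y z h h3 (.inr (by linarith [pow_pos two_pos n (M₀ := ℝ)]))
  intro n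
  induction n with
  | zero =>
    rintro x y z h h3 (he | hz)
    · exact he.finite_inter_Ioo hφ K
    · have hx := h3 x (left_mem_Icc.mpr h.pair.lt.le)
      have hy := h3 y (right_mem_Icc.mpr h.pair.lt.le)
      refine IsExpanding.finite_inter_Ioo hφ ⟨h, hx.le, hy.le, ?_⟩ K
      exact (by linarith : ‖φ z‖ ≤ ‖φ x‖).trans (le_max_left _ _)
  | succ n ih =>
    rintro x y z h h3 (he | hz)
    · exact he.finite_inter_Ioo hφ K
    have hxm := h.pair.mediant_left.lt
    have hmy := h.pair.mediant_right.lt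
    have hx := h3 x (left_mem_Icc.mpr h.pair.lt.le)
    have hy := h3 y (right_mem_Icc.mpr h.pair.lt.le)
    have hm := h3 (mediant x y) ⟨hxm.le, hmy.le⟩
    rw [pow_succ] at hz
    refine finite_inter_Ioo_of_split (m := mediant x y) ?_ ?_
    · refine ih x (mediant x y) y h.left (fun q hq => h3 q ⟨hq.1, hq.2.trans hmy.le⟩) ?_
      exact (h.isExpanding_left_or hφ hx.le hm.le).imp_right fun h2 => by linarith
    · refine ih (mediant x y) y x h.right (fun q hq => h3 q ⟨hxm.le.trans hq.1, hq.2⟩) ?_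
      exact (h.isExpanding_right_or hφ hm.le hy.le).imp_right fun h2 => by linarith

end IsFareyCell

end FareyTree

lemma exists_int_infinite_inter_Ioo {S : Set ℚ} (hS : S.Infinite) {a b : ℚ} (hab : S ⊆ Icc a b) :
    ∃ n : ℤ, (S ∩ Ioo (n : ℚ) (n + 1 : ℤ)).Infinite := by
  by_contra! H
  refine hS (((Finset.Icc ⌊a⌋ ⌊b⌋).finite_toSet.biUnion fun n _ =>
    (H n).union (finite_singleton (n : ℚ))).subset fun q hq => ?_)
  simp only [mem_iUnion, Finset.coe_Icc, mem_Icc]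
  refine ⟨⌊q⌋, ⟨Int.floor_mono (hab hq).1, Int.floor_mono (hab hq).2⟩, ?_⟩
  rcases (Int.floor_le q).eq_or_lt with h | h
  · exact .inr h.symm
  · exact .inl ⟨hq, h, by push_cast; exact Int.lt_floor_add_one q⟩

lemma exists_isFareyCell_infinite_inter_Ioo {S : Set ℚ} (hS : S.Infinite) {a b : ℚ}
    (hab : S ⊆ Icc a b) {ε : ℝ} (hε : 0 < ε) :
    ∃ x y z, IsFareyCell x y z ∧ (y : ℝ) - x < ε ∧ (S ∩ Ioo x y).Infinite := by
  obtain ⟨n, hn⟩ := exists_int_infinite_inter_Ioo hS hab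
  have hsplit : ∀ k : ℕ, ∃ x y z, IsFareyCell x y z ∧ (k : ℤ) ≤ x.den * y.den ∧
      (S ∩ Ioo x y).Infinite := by
    intro k
    induction k with
    | zero => exact ⟨n, (n + 1 : ℤ), OnePoint.infty, isFareyCell_intCast n, by positivity, hn⟩
    | succ k ih =>
      obtain ⟨x, y, z, h, hk, hinf⟩ := ih
      have hden := h.pair.den_mediant
      have := x.pos
      have := y.pos
      rcases infinite_inter_Ioo_or hinf (mediant x y) with hl | hr
      · exact ⟨x, mediant x y, y, h.left, by rw [hden]; push_cast; nlinarith, hl⟩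
      · exact ⟨mediant x y, y, x, h.right, by rw [hden]; push_cast; nlinarith, hr⟩
  obtain ⟨k, hk⟩ := exists_nat_gt (1 / ε)
  obtain ⟨x, y, z, h, hxy, hinf⟩ := hsplit k
  refine ⟨x, y, z, h, ?_, hinf⟩
  have hlen : ((y : ℝ) - x) * (x.den * y.den) = 1 := by
    exact_mod_cast congrArg ((↑) : ℚ → ℝ) h.pair.sub_mul_den_mul_den
  have hxy' : (k : ℝ) ≤ x.den * y.den := by exact_mod_cast hxy
  rw [div_lt_iff₀ hε] at hk
  nlinarith [h.pair.lt]

theorem exists_injective_tendsto_of_accPt {X : Type*} [TopologicalSpace X] [T1Space X] {x : X}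
    [(𝓝 x).IsCountablyGenerated] {s : Set X} (h : AccPt x (𝓟 s)) :
    ∃ u : ℕ → X, Function.Injective u ∧ Tendsto u atTop (𝓝 x) ∧ ∀ n, u n ∈ s := by
  obtain ⟨w, hw, hws⟩ := exists_seq_forall_of_frequently (accPt_iff_frequently.mp h)
  have hfresh : ∀ n, ∃ N, ∀ k ≥ N, ∀ j ∈ Finset.range (n + 1), w k ≠ w j := fun n =>
    eventually_atTop.mp <| (eventually_all_finset _).mpr fun j _ =>
      hw.eventually (eventually_ne_nhds (hws j).1.symm)
  choose g hg using hfresh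
  -- a subsequence each of whose terms differs from all earlier terms of `w`
  let ψ : ℕ → ℕ := fun n => Nat.rec 0 (fun _ m => max (g m) (m + 1)) n
  have hψ : StrictMono ψ :=
    strictMono_nat_of_lt_succ fun n => (Nat.lt_succ_self _).trans_le (le_max_right _ _)
  refine ⟨w ∘ ψ, .of_lt_imp_ne fun m n hmn => ?_, hw.comp hψ.tendsto_atTop, fun n => (hws _).2⟩
  refine (hg (ψ m) (ψ n) ((le_max_left _ _).trans (hψ.monotone hmn)) (ψ m) ?_).symm
  exact Finset.self_mem_range_succ _

instance : FirstCountableTopology RHat := by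
  refine ⟨fun x => ?_⟩
  induction x using OnePoint.rec with
  | infty =>
    rw [OnePoint.nhds_infty_eq, coclosedCompact_eq_cocompact, cocompact_eq_atBot_atTop]
    infer_instance
  | coe x => rw [OnePoint.nhds_coe_eq]; infer_instance

lemma toRHat_injective : Function.Injective toRHat :=
  Option.map_injective fun _ _ h => Rat.cast_injective h

def boundedLocus (φ : QHat → ℂ) (K : ℝ) : Set RHat := toRHat '' {X | ‖φ X‖ ≤ K}

section EndInvariants

variable {φ : QHat → ℂ}

lemma IsEndInv.accPt {lam : RHat} (h : IsEndInv φ lam) :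
    ∃ K, AccPt lam (𝓟 (boundedLocus φ K)) := by
  obtain ⟨K, -, Y, hY, hlim, hK⟩ := h
  refine ⟨K, accPt_iff_frequently.mpr (hlim.frequently (Eventually.frequently ?_))⟩
  have hne : ∀ᶠ n in cofinite, toRHat (Y n) ≠ lam :=
    (toRHat_injective.comp hY).tendsto_cofinite.eventually (eventually_cofinite_ne lam)
  rw [Nat.cofinite_eq_atTop] at hne
  exact hne.mono fun n hn => ⟨hn, Y n, hK n, rfl⟩

lemma isEndInv_of_accPt {lam : RHat} {K : ℝ} (hK : 0 < K)
    (h : AccPt lam (𝓟 (boundedLocus φ K))) : IsEndInv φ lam := by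
  obtain ⟨u, hu, hlim, hmem⟩ := exists_injective_tendsto_of_accPt h
  choose Y hY hYu using hmem
  obtain rfl : (fun n => toRHat (Y n)) = u := funext hYu
  exact ⟨K, hK, Y, .of_comp hu, hlim, hY⟩

lemma infinite_setOf_norm_le_dist_lt {m : ℝ} {K : ℝ} (hK : AccPt (m : RHat) (𝓟 (boundedLocus φ K)))
    {ε : ℝ} (hε : 0 < ε) : {q : ℚ | ‖φ q‖ ≤ K ∧ dist (q : ℝ) m < ε}.Infinite := by
  have hU : ((↑) : ℝ → RHat) '' Metric.ball m ε ∈ 𝓝 (m : RHat) :=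
    (OnePoint.isOpenMap_coe _ Metric.isOpen_ball).mem_nhds ⟨m, Metric.mem_ball_self hε, rfl⟩
  have hacc : AccPt (m : RHat) (𝓟 (boundedLocus φ K ∩ (↑) '' Metric.ball m ε)) :=
    accPt_iff_frequently.mpr <| ((accPt_iff_frequently.mp hK).and_eventually hU).mono
      fun _ ⟨⟨hne, hB⟩, hU⟩ => ⟨hne, hB, hU⟩
  refine ((Set.Infinite.of_accPt hacc).mono ?_).of_image (fun q : ℚ => toRHat q)
  rintro _ ⟨⟨X, hX, rfl⟩, t, ht, hXt⟩
  induction X using OnePoint.rec with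
  | infty => exact absurd hXt (OnePoint.coe_ne_infty t)
  | coe q =>
    obtain rfl : t = q := OnePoint.coe_injective hXt
    exact ⟨q, ⟨hX, ht⟩, rfl⟩

theorem not_isEndInv_coe (hφ : EdgeRelation φ) {m : ℝ}
    (hm : ∀ᶠ ν in 𝓝 (m : RHat), ν ∉ boundedLocus φ 3) : ¬ IsEndInv φ m := by
  intro hE
  obtain ⟨K, hK⟩ := hE.accPt
  obtain ⟨δ, hδ, hbig⟩ : ∃ δ > 0, ∀ q : ℚ, dist (q : ℝ) m < δ → 3 < ‖φ q‖ := by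
    obtain ⟨δ, hδ, h⟩ :=
      Metric.eventually_nhds_iff.mp ((OnePoint.continuous_coe.tendsto m).eventually hm)
    exact ⟨δ, hδ, fun q hq => not_le.mp fun h3 => h hq ⟨q, h3, rfl⟩⟩
  obtain ⟨a, ha⟩ := exists_rat_lt (m - δ)
  obtain ⟨b, hb⟩ := exists_rat_gt (m + δ)
  have hab : {q : ℚ | ‖φ q‖ ≤ K ∧ dist (q : ℝ) m < δ / 2} ⊆ Icc a b := fun q ⟨_, hq⟩ => by
    rw [Real.dist_eq, abs_lt] at hq
    exact ⟨by exact_mod_cast (by linarith : (a : ℝ) ≤ q),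
      by exact_mod_cast (by linarith : (q : ℝ) ≤ b)⟩
  obtain ⟨x, y, z, hc, hlen, hinf⟩ := exists_isFareyCell_infinite_inter_Ioo
    (infinite_setOf_norm_le_dist_lt hK (half_pos hδ)) hab (half_pos hδ)
  obtain ⟨q, ⟨-, hqm⟩, hqxy⟩ := hinf.nonempty
  have h3 : ∀ p ∈ Icc x y, 3 < ‖φ p‖ := by
    intro p hp
    refine hbig p ?_
    have hxp : (x : ℝ) ≤ p := by exact_mod_cast hp.1
    have hpy : (p : ℝ) ≤ y := by exact_mod_cast hp.2
    have hxq : (x : ℝ) < q := by exact_mod_cast hqxy.1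
    have hqy : (q : ℝ) < y := by exact_mod_cast hqxy.2
    rw [Real.dist_eq, abs_lt] at hqm ⊢
    constructor <;> linarith
  exact hinf ((hc.finite_inter_Ioo hφ h3 K).subset fun p hp => ⟨hp.1.1, hp.2⟩)

end EndInvariants

/-- For every Fricke trace map `φ`, the set `ℰ(φ)` is closed
in `ℝ̂`. -/
theorem endInvs_isClosed (κ : ℂ) (φ : QHat → ℂ) (hφ : IsFricke κ φ) :
    IsClosed (endInvs φ) := by
  rw [← isOpen_compl_iff, isOpen_iff_mem_nhds]
  intro lam hlam
  have h3 : ∀ᶠ μ in 𝓝[≠] lam, μ ∉ boundedLocus φ 3 := by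
    rw [← not_frequently, ← accPt_iff_frequently_nhdsNE]
    exact fun h => hlam (isEndInv_of_accPt three_pos h)
  rw [← nhdsNE_sup_pure, mem_sup]
  refine ⟨?_, hlam⟩
  filter_upwards [eventually_eventually_nhdsWithin.mpr h3,
    nhdsNE_le_cofinite lam (eventually_cofinite_ne OnePoint.infty), self_mem_nhdsWithin]
    with μ hμ hμ_ne_infty hμ_ne
  obtain ⟨m, rfl⟩ := OnePoint.ne_infty_iff_exists.mp hμ_ne_infty
  exact not_isEndInv_coe hφ.2 (isOpen_compl_singleton.nhdsWithin_eq hμ_ne ▸ hμ)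

end TWZ
end
end
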